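/- arXiv:2410.15493 — 2 statements merged into one kernel-verified Lean document; each statement's English description precedes it below -/
import Mathlib

section
/- Equip ℝ × ℝ² with the parabolic norm ‖(t,x)‖_𝔰 := |t|^{1/2} + |x|, and for z = (z₀, z') ∈ ℝ × ℝ², λ ∈ (0,1], and φ : ℝ × ℝ² → ℝ define the rescaled test function φ_z^λ(s,y) := λ^{−4} φ(λ^{−2}(s − z₀), λ^{−1}(y − z')). Let a ∈ (−4, 0]. Then there exists a constant C > 0 (depending only on a) such that for every λ ∈ (0,1], every z ∈ ℝ × ℝ², every measurable f : ℝ × ℝ² → ℝ with |f(w)| ≤ ‖w − z‖_𝔰^a for all w ≠ z, and every measurable φ with |φ| ≤ 1 vanishing outside the set {w : ‖w‖_𝔰 ≤ 1}, one has |∫_{ℝ×ℝ²} f(w) φ_z^λ(w) dw| ≤ C λ^a. -/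
open MeasureTheory

/-- The parabolic norm `‖(t,x)‖_𝔰 = |t|^{1/2} + |x|` on `ℝ × ℝ²`. -/
noncomputable def parabolicNorm (z : ℝ × EuclideanSpace ℝ (Fin 2)) : ℝ :=
  |z.1| ^ ((1 : ℝ)/2) + ‖z.2‖

/-- The parabolically rescaled and recentered test function
`φ_z^λ(s,y) = λ^{−4} φ(λ^{−2}(s − z₀), λ^{−1}(y − z'))`. -/
noncomputable def scaledTest (lam : ℝ) (z : ℝ × EuclideanSpace ℝ (Fin 2))
    (φ : ℝ × EuclideanSpace ℝ (Fin 2) → ℝ) (w : ℝ × EuclideanSpace ℝ (Fin 2)) : ℝ :=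
  lam ^ (-4 : ℤ) * φ (lam ^ (-2 : ℤ) * (w.1 - z.1), (lam ^ (-1 : ℤ)) • (w.2 - z.2))

/-!
For `a ≤ 0` the parabolic norm dominates each of `|t|^{1/2}`, `|x₁|`, `|x₂|`, and splitting the
exponent gives `‖(t,x)‖_𝔰^a ≤ |t|^{a/4} |x₁|^{a/4} |x₂|^{a/4}` off the coordinate hyperplanes,
a null set. Each factor is locally integrable because `a/4 > -1`. On the support of `φ_z^λ` one
has `|t - z₀| ≤ λ²` and `|x_i - z'_i| ≤ λ`, so with `q = a/4 + 1` the pairing is bounded by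
`λ^{-4} · (2λ^{2q}/q) · (2λ^q/q)² = 8 q⁻³ λ^a`.
-/

open Set

noncomputable def truncAbsRpow (r b : ℝ) : ℝ → ℝ := (Icc (-b) b).indicator fun t => |t| ^ r

theorem truncAbsRpow_nonneg (r b t : ℝ) : 0 ≤ truncAbsRpow r b t :=
  indicator_nonneg (fun t _ => by positivity) t

theorem truncAbsRpow_of_abs_le {r b t : ℝ} (h : |t| ≤ b) : truncAbsRpow r b t = |t| ^ r :=
  indicator_of_mem (mem_Icc.mpr (abs_le.mp h)) _

theorem truncAbsRpow_eq_indicator_comp_abs (r b t : ℝ) :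
    truncAbsRpow r b t = (Iic b).indicator (· ^ r) |t| := by
  by_cases h : |t| ≤ b
  · rw [truncAbsRpow_of_abs_le h, indicator_of_mem (mem_Iic.mpr h)]
  · rw [truncAbsRpow, indicator_of_notMem (by rwa [mem_Icc, ← abs_le]),
      indicator_of_notMem (by rwa [mem_Iic])]

theorem integrable_truncAbsRpow {r : ℝ} (hr : -1 < r) (b : ℝ) : Integrable (truncAbsRpow r b) := by
  have hloc : LocallyIntegrable (fun t : ℝ => |t| ^ r) := by
    refine locallyIntegrable_of_norm_le_rpow (C := 1) (α := -r) (by simp) (by simp; linarith)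
      (Filter.Eventually.of_forall fun t => ?_) (measurable_abs.pow_const r).aestronglyMeasurable
    rw [neg_neg, one_mul, Real.norm_eq_abs, Real.norm_eq_abs, abs_of_nonneg (by positivity)]
  exact (hloc.integrableOn_isCompact isCompact_Icc).integrable_indicator measurableSet_Icc

theorem integral_truncAbsRpow {r : ℝ} (hr : -1 < r) {b : ℝ} (hb : 0 ≤ b) :
    ∫ t, truncAbsRpow r b t = 2 * b ^ (r + 1) / (r + 1) := by
  simp_rw [truncAbsRpow_eq_indicator_comp_abs]
  rw [integral_comp_abs (f := (Iic b).indicator (· ^ r)), setIntegral_indicator measurableSet_Iic,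
    Ioi_inter_Iic, ← intervalIntegral.integral_of_le hb, integral_rpow (Or.inl hr),
    Real.zero_rpow (by linarith), sub_zero, mul_div_assoc]

section EuclideanSpace

variable {ι : Type*} [Fintype ι]

theorem integrable_euclideanSpace_prod_apply {g : ι → ℝ → ℝ} (hg : ∀ i, Integrable (g i)) :
    Integrable fun x : EuclideanSpace ℝ ι => ∏ i, g i (x i) :=
  ((PiLp.volume_preserving_toLp ι).integrable_comp_emb
    (MeasurableEquiv.toLp 2 (ι → ℝ)).measurableEmbedding).mp (Integrable.fintype_prod hg)

theorem integral_euclideanSpace_prod_apply (g : ι → ℝ → ℝ) :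
    ∫ x : EuclideanSpace ℝ ι, ∏ i, g i (x i) = ∏ i, ∫ t, g i t := by
  rw [← integral_fintype_prod_volume_eq_prod, ← (PiLp.volume_preserving_toLp ι).integral_comp
    (MeasurableEquiv.toLp 2 (ι → ℝ)).measurableEmbedding]

theorem ae_euclideanSpace_apply_ne (c : EuclideanSpace ℝ ι) :
    ∀ᵐ x : EuclideanSpace ℝ ι, ∀ i, x i ≠ c i :=
  ae_all_iff.mpr fun i =>
    (PiLp.volume_preserving_ofLp ι).quasiMeasurePreserving.ae (Measure.ae_eval_ne _ i (c i))

theorem ae_prod_euclideanSpace_apply_ne (z : ℝ × EuclideanSpace ℝ ι) :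
    ∀ᵐ w : ℝ × EuclideanSpace ℝ ι, w.1 ≠ z.1 ∧ ∀ i, w.2 i ≠ z.2 i :=
  (Measure.quasiMeasurePreserving_fst.ae (compl_mem_ae_iff.mpr (measure_singleton z.1))).and
    (Measure.quasiMeasurePreserving_snd.ae (ae_euclideanSpace_apply_ne z.2))

-- Instance search does not see through `volume` on this product to `volume.prod volume`.
instance : (volume : Measure (ℝ × EuclideanSpace ℝ ι)).IsAddHaarMeasure := by
  rw [Measure.volume_eq_prod]
  infer_instance

theorem EuclideanSpace.norm_rpow_le_prod_abs_rpow {c : ℝ} (hc : c ≤ 0) {v : EuclideanSpace ℝ ι}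
    (hv : ∀ i, v i ≠ 0) : ‖v‖ ^ (Fintype.card ι * c) ≤ ∏ i, |v i| ^ c := by
  rw [mul_comm, Real.rpow_mul (norm_nonneg v), Real.rpow_natCast, ← Finset.card_univ,
    ← Finset.prod_const]
  exact Finset.prod_le_prod (fun i _ => by positivity) fun i _ =>
    Real.rpow_le_rpow_of_nonpos (abs_pos.mpr (hv i)) (PiLp.norm_apply_le v i) hc

end EuclideanSpace

theorem parabolicNorm_rpow_le {a : ℝ} (ha : a ≤ 0) {u : ℝ} {v : EuclideanSpace ℝ (Fin 2)}
    (hu : u ≠ 0) (hv : ∀ i, v i ≠ 0) :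
    parabolicNorm (u, v) ^ a ≤ |u| ^ (a / 4) * ∏ i, |v i| ^ (a / 4) := by
  have hs : 0 < |u| ^ (1 / 2 : ℝ) := by positivity
  have hρ : 0 < ‖v‖ := (abs_pos.mpr (hv 0)).trans_le (PiLp.norm_apply_le v 0)
  have hP : 0 < parabolicNorm (u, v) := add_pos hs hρ
  have hsplit : parabolicNorm (u, v) ^ a
      = parabolicNorm (u, v) ^ (a / 2) * parabolicNorm (u, v) ^ (a / 2) := by
    rw [← Real.rpow_add hP, add_halves]
  have htime : parabolicNorm (u, v) ^ (a / 2) ≤ |u| ^ (a / 4) := by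
    calc parabolicNorm (u, v) ^ (a / 2) ≤ (|u| ^ (1 / 2 : ℝ)) ^ (a / 2) :=
          Real.rpow_le_rpow_of_nonpos hs (le_add_of_nonneg_right (norm_nonneg v)) (by linarith)
      _ = |u| ^ (a / 4) := by
          rw [← Real.rpow_mul (abs_nonneg u), one_div_mul_eq_div, div_div]
          norm_num
  have hspace : parabolicNorm (u, v) ^ (a / 2) ≤ ∏ i, |v i| ^ (a / 4) := by
    calc parabolicNorm (u, v) ^ (a / 2) ≤ ‖v‖ ^ (Fintype.card (Fin 2) * (a / 4)) := by
          rw [show (Fintype.card (Fin 2) : ℝ) * (a / 4) = a / 2 by simp; ring]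
          exact Real.rpow_le_rpow_of_nonpos hρ (le_add_of_nonneg_left hs.le) (by linarith)
      _ ≤ ∏ i, |v i| ^ (a / 4) :=
          EuclideanSpace.norm_rpow_le_prod_abs_rpow (by linarith) hv
  rw [hsplit]
  exact mul_le_mul htime hspace (Real.rpow_nonneg hP.le _) (by positivity)

theorem parabolicNorm_dilate {lam : ℝ} (hlam : 0 < lam) (u : ℝ) (v : EuclideanSpace ℝ (Fin 2)) :
    parabolicNorm (lam ^ (-2 : ℤ) * u, lam ^ (-1 : ℤ) • v) = lam⁻¹ * parabolicNorm (u, v) := by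
  have hsqrt : (lam ^ (-2 : ℤ)) ^ (1 / 2 : ℝ) = lam⁻¹ := by
    rw [zpow_neg, zpow_ofNat, ← inv_pow, ← Real.sqrt_eq_rpow, Real.sqrt_sq (by positivity)]
  simp only [parabolicNorm, abs_mul, norm_smul, Real.norm_eq_abs, abs_of_pos (zpow_pos hlam _),
    Real.mul_rpow (zpow_pos hlam _).le (abs_nonneg u), hsqrt, zpow_neg_one,
    abs_of_pos (inv_pos.mpr hlam)]
  ring

theorem abs_le_sq_and_norm_le_of_parabolicNorm_le {lam u : ℝ} {v : EuclideanSpace ℝ (Fin 2)}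
    (h : parabolicNorm (u, v) ≤ lam) : |u| ≤ lam ^ 2 ∧ ‖v‖ ≤ lam := by
  have hs : 0 ≤ |u| ^ (1 / 2 : ℝ) := by positivity
  have ht : |u| ^ (1 / 2 : ℝ) ≤ lam := le_of_add_le_of_nonneg_left h (norm_nonneg v)
  refine ⟨?_, le_of_add_le_of_nonneg_right h hs⟩
  calc |u| = (|u| ^ (1 / 2 : ℝ)) ^ 2 := by
        rw [← Real.sqrt_eq_rpow, Real.sq_sqrt (abs_nonneg u)]
    _ ≤ lam ^ 2 := pow_le_pow_left₀ hs ht 2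

section ScaledTest

variable {lam : ℝ} {z w : ℝ × EuclideanSpace ℝ (Fin 2)} {φ : ℝ × EuclideanSpace ℝ (Fin 2) → ℝ}

theorem abs_scaledTest_le (hlam : 0 < lam) (hφ : ∀ w, |φ w| ≤ 1) :
    |scaledTest lam z φ w| ≤ lam ^ (-4 : ℤ) := by
  rw [scaledTest, abs_mul, abs_of_pos (zpow_pos hlam _)]
  exact mul_le_of_le_one_right (zpow_pos hlam _).le (hφ _)

theorem scaledTest_eq_zero (hlam : 0 < lam) (hφ : ∀ w, 1 < parabolicNorm w → φ w = 0)
    (hw : lam < parabolicNorm (w - z)) : scaledTest lam z φ w = 0 := by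
  refine mul_eq_zero_of_right _ (hφ _ ?_)
  rwa [parabolicNorm_dilate hlam, one_lt_inv_mul₀ hlam]

end ScaledTest

noncomputable def parabolicMajorant (a lam : ℝ) (w : ℝ × EuclideanSpace ℝ (Fin 2)) : ℝ :=
  truncAbsRpow (a / 4) (lam ^ 2) w.1 * ∏ i, truncAbsRpow (a / 4) lam (w.2 i)

theorem parabolicMajorant_nonneg (a lam : ℝ) (w : ℝ × EuclideanSpace ℝ (Fin 2)) :
    0 ≤ parabolicMajorant a lam w :=
  mul_nonneg (truncAbsRpow_nonneg _ _ _) (Finset.prod_nonneg fun _ _ => truncAbsRpow_nonneg _ _ _)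

theorem parabolicNorm_rpow_le_parabolicMajorant {a lam : ℝ} (ha : a ≤ 0)
    {w : ℝ × EuclideanSpace ℝ (Fin 2)} (hw₁ : w.1 ≠ 0) (hw₂ : ∀ i, w.2 i ≠ 0)
    (hlam : parabolicNorm w ≤ lam) : parabolicNorm w ^ a ≤ parabolicMajorant a lam w := by
  obtain ⟨htime, hspace⟩ := abs_le_sq_and_norm_le_of_parabolicNorm_le hlam
  rw [parabolicMajorant, truncAbsRpow_of_abs_le htime]
  simp_rw [truncAbsRpow_of_abs_le ((PiLp.norm_apply_le w.2 _).trans hspace)]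
  exact parabolicNorm_rpow_le ha hw₁ hw₂

theorem integrable_parabolicMajorant {a : ℝ} (ha : -4 < a) (lam : ℝ) :
    Integrable (parabolicMajorant a lam) :=
  (integrable_truncAbsRpow (by linarith) _).mul_prod
    (integrable_euclideanSpace_prod_apply fun _ => integrable_truncAbsRpow (by linarith) _)

theorem integral_parabolicMajorant {a : ℝ} (ha : -4 < a) {lam : ℝ} (hlam : 0 ≤ lam) :
    ∫ w, parabolicMajorant a lam w = 8 / (a / 4 + 1) ^ 3 * lam ^ (4 + a) := by
  have hq : a / 4 + 1 ≠ 0 := by linarith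
  unfold parabolicMajorant
  rw [Measure.volume_eq_prod, integral_prod_mul (truncAbsRpow (a / 4) (lam ^ 2))
      fun x : EuclideanSpace ℝ (Fin 2) => ∏ i, truncAbsRpow (a / 4) lam (x i),
    integral_euclideanSpace_prod_apply,
    integral_truncAbsRpow (by linarith) (sq_nonneg lam), integral_truncAbsRpow (by linarith) hlam,
    Finset.prod_const, Finset.card_univ, Fintype.card_fin, ← Real.rpow_pow_comm hlam,
    show 4 + a = (a / 4 + 1) * (4 : ℕ) by push_cast; ring, Real.rpow_mul_natCast hlam]
  field_simp
  ring

theorem abs_mul_scaledTest_le_parabolicMajorant {a lam : ℝ} (ha : a ≤ 0) (hlam : 0 < lam)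
    {z w : ℝ × EuclideanSpace ℝ (Fin 2)} {f φ : ℝ × EuclideanSpace ℝ (Fin 2) → ℝ}
    (hf : |f w| ≤ parabolicNorm (w - z) ^ a) (hφ₁ : ∀ w, |φ w| ≤ 1)
    (hφ₀ : ∀ w, 1 < parabolicNorm w → φ w = 0) (hw₁ : w.1 ≠ z.1) (hw₂ : ∀ i, w.2 i ≠ z.2 i) :
    |f w * scaledTest lam z φ w| ≤ lam ^ (-4 : ℤ) * parabolicMajorant a lam (w - z) := by
  by_cases hsupp : parabolicNorm (w - z) ≤ lam
  · rw [abs_mul, mul_comm (lam ^ (-4 : ℤ))]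
    refine mul_le_mul (hf.trans ?_) (abs_scaledTest_le hlam hφ₁) (abs_nonneg _)
      (parabolicMajorant_nonneg _ _ _)
    exact parabolicNorm_rpow_le_parabolicMajorant ha (sub_ne_zero.mpr hw₁)
      (fun i => sub_ne_zero.mpr (hw₂ i)) hsupp
  · rw [scaledTest_eq_zero hlam hφ₀ (not_le.mp hsupp), mul_zero, abs_zero]
    exact mul_nonneg (zpow_pos hlam _).le (parabolicMajorant_nonneg _ _ _)

/-- Pairing a parabolically singular function of order `a ∈ (−4, 0]` against a scaled test
function: there is `C > 0` (depending only on `a`) such that for all `λ ∈ (0,1]`,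
all base points `z`, all measurable `f` with `|f(w)| ≤ ‖w − z‖_𝔰^a` for `w ≠ z`, and all
measurable `φ` bounded by `1` and vanishing outside the parabolic unit ball,
`|∫ f(w) φ_z^λ(w) dw| ≤ C λ^a`. -/
theorem singular_pairing_estimate (a : ℝ) (ha : a ∈ Set.Ioc (-4 : ℝ) 0) :
    ∃ C : ℝ, 0 < C ∧ ∀ lam ∈ Set.Ioc (0 : ℝ) 1, ∀ z : ℝ × EuclideanSpace ℝ (Fin 2),
      ∀ f : ℝ × EuclideanSpace ℝ (Fin 2) → ℝ, Measurable f →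
      (∀ w : ℝ × EuclideanSpace ℝ (Fin 2), w ≠ z → |f w| ≤ parabolicNorm (w - z) ^ a) →
      ∀ φ : ℝ × EuclideanSpace ℝ (Fin 2) → ℝ, Measurable φ →
      (∀ w, |φ w| ≤ 1) → (∀ w, 1 < parabolicNorm w → φ w = 0) →
      |∫ w : ℝ × EuclideanSpace ℝ (Fin 2), f w * scaledTest lam z φ w| ≤ C * lam ^ a := by
  obtain ⟨ha₄, ha₀⟩ := ha
  have hq : 0 < a / 4 + 1 := by linarith
  refine ⟨8 / (a / 4 + 1) ^ 3, by positivity, ?_⟩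
  rintro lam ⟨hlam, -⟩ z f - hf φ - hφ₁ hφ₀
  calc |∫ w, f w * scaledTest lam z φ w|
      ≤ ∫ w, lam ^ (-4 : ℤ) * parabolicMajorant a lam (w - z) := by
        rw [← Real.norm_eq_abs]
        refine norm_integral_le_of_norm_le
          (((integrable_parabolicMajorant ha₄ lam).comp_sub_right z).const_mul _) ?_
        filter_upwards [ae_prod_euclideanSpace_apply_ne z] with w ⟨hw₁, hw₂⟩
        exact abs_mul_scaledTest_le_parabolicMajorant ha₀ hlam
          (hf w fun h => hw₁ (congrArg Prod.fst h)) hφ₁ hφ₀ hw₁ hw₂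
    _ = lam ^ (-4 : ℝ) * (8 / (a / 4 + 1) ^ 3 * lam ^ (4 + a)) := by
        rw [integral_const_mul, integral_sub_right_eq_self (parabolicMajorant a lam),
          integral_parabolicMajorant ha₄ hlam.le, ← Real.rpow_intCast]
        norm_num
    _ = 8 / (a / 4 + 1) ^ 3 * lam ^ a := by
        rw [mul_left_comm, ← Real.rpow_add hlam, neg_add_cancel_left]
end

section
/- Let 4π ≤ β² < 6π, κ = 10⁻³(6π − β²), β̄ = β²/(4π) + κ, let η ∈ (β̄/2 − 1, 0), ν ∈ (β²/(2π) − 2, 1], and set γ = 3 − β²/(2π) − (1−ν)η. Then there exists a constant C (depending only on β, η, ν) such that for every T ∈ (0,1] one has sup over 0 < t ≤ T and x ∈ 𝕋² of t^{(1−η)/2} ∫₀^t ∫_{𝕋²} s^{−(1−η)ν/2} ((t−s)^{1/2} + d(x,y))^{−2 − β²/(2π) + ν} dy ds ≤ C T^{γ/2}. -/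
open MeasureTheory Real
open Set

/-- The flat two-dimensional torus `(ℝ/ℤ)²`. -/
noncomputable abbrev Torus2 := AddCircle (1 : ℝ) × AddCircle (1 : ℝ)

/-!
Write `A = (1 - η)ν/2` and `B = (β²/(2π) - ν)/2`, so that the spatial exponent is `-2(1 + B)`;
the constraints on `β, η, ν` give `0 ≤ A < 1` and `0 < B < 1`. The metric on `𝕋²` is the sup of
the two circle distances, so `(c + d(x, y))^(-2(1+B))` is at most a product of one-dimensional
kernels `(c + d(xᵢ, yᵢ))^(-(1+B))`, each integrating to at most `(2/B) c^(-B)`. With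
`c = (t - s)^(1/2)` the space integral is `≲ s^(-A) (t - s)^(-B)`, whose time integral is a Beta
integral `≲ t^(1 - A - B)`. The exponents add up to `t^(γ/2)` with `γ ≥ 0`, which is monotone
in `t ≤ T`.
-/

theorem integral_Ioi_zero_const_add_rpow_neg {c B : ℝ} (hc : 0 < c) (hB : 0 < B) :
    ∫ x in Ioi (0 : ℝ), (c + x) ^ (-(1 + B)) = c ^ (-B) / B := by
  have h := (measurePreserving_add_left volume c).setIntegral_preimage_emb
    (measurableEmbedding_addLeft c) (fun x : ℝ => x ^ (-(1 + B))) (Ioi c)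
  rw [preimage_const_add_Ioi, sub_self] at h
  rw [h, integral_Ioi_rpow_of_lt (by linarith) hc, show -(1 + B) + 1 = -B by ring, neg_div_neg_eq]

theorem integral_const_add_abs_rpow_neg {c B : ℝ} (hc : 0 < c) (hB : 0 < B) :
    ∫ x : ℝ, (c + |x|) ^ (-(1 + B)) = 2 * (c ^ (-B) / B) := by
  rw [integral_comp_abs (f := fun x => (c + x) ^ (-(1 + B))),
    integral_Ioi_zero_const_add_rpow_neg hc hB]

theorem integrable_const_add_abs_rpow_neg {c B : ℝ} (hc : 0 < c) (hB : 0 < B) :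
    Integrable (fun x : ℝ => (c + |x|) ^ (-(1 + B))) :=
  .of_integral_ne_zero <| by
    rw [integral_const_add_abs_rpow_neg hc hB]
    positivity

theorem AddCircle.integral_const_add_dist_rpow_neg_le {p : ℝ} [Fact (0 < p)] {c B : ℝ}
    (hc : 0 < c) (hB : 0 < B) (z : AddCircle p) :
    ∫ u : AddCircle p, (c + dist z u) ^ (-(1 + B)) ≤ 2 / B * c ^ (-B) := by
  have hp : 0 < p := Fact.out
  have hnorm : ∀ x ∈ Ioc (-(p / 2)) (-(p / 2) + p),
      (c + ‖(x : AddCircle p)‖) ^ (-(1 + B)) = (c + |x|) ^ (-(1 + B)) := by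
    intro x hx
    rw [(AddCircle.norm_coe_eq_abs_iff p hp.ne').mpr
      (by rw [abs_of_pos hp]; exact abs_le.mpr ⟨hx.1.le, by linarith [hx.2]⟩)]
  calc ∫ u : AddCircle p, (c + dist z u) ^ (-(1 + B))
      = ∫ u : AddCircle p, (c + ‖u - z‖) ^ (-(1 + B)) := by
        simp only [dist_comm z, dist_eq_norm]
    _ = ∫ x in Ioc (-(p / 2)) (-(p / 2) + p), (c + ‖(x : AddCircle p)‖) ^ (-(1 + B)) := by
        rw [integral_sub_right_eq_self (fun u : AddCircle p => (c + ‖u‖) ^ (-(1 + B))) z]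
        exact (AddCircle.integral_preimage p _ _).symm
    _ = ∫ x in Ioc (-(p / 2)) (-(p / 2) + p), (c + |x|) ^ (-(1 + B)) :=
        setIntegral_congr_fun measurableSet_Ioc hnorm
    _ ≤ ∫ x : ℝ, (c + |x|) ^ (-(1 + B)) :=
        setIntegral_le_integral (integrable_const_add_abs_rpow_neg hc hB)
          (.of_forall fun x => by positivity)
    _ = 2 / B * c ^ (-B) := by rw [integral_const_add_abs_rpow_neg hc hB]; ring

theorem const_add_max_rpow_neg_le {a b c r : ℝ} (ha : 0 ≤ a) (hb : 0 ≤ b) (hc : 0 < c)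
    (hr : 0 ≤ r) : (c + max a b) ^ (-(2 * r)) ≤ (c + a) ^ (-r) * (c + b) ^ (-r) := by
  have hmax : 0 < c + max a b := by positivity
  rw [show -(2 * r) = -r + -r by ring, rpow_add hmax]
  have hneg : -r ≤ 0 := by linarith
  exact mul_le_mul (rpow_le_rpow_of_nonpos (by positivity) (by simp) hneg)
    (rpow_le_rpow_of_nonpos (by positivity) (by simp) hneg) (by positivity) (by positivity)

theorem AddCircle.integral_prod_const_add_dist_rpow_neg_le {p p' : ℝ} [Fact (0 < p)]
    [Fact (0 < p')] {c B : ℝ} (hc : 0 < c) (hB : 0 < B) (x : AddCircle p × AddCircle p') :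
    ∫ y, (c + dist x y) ^ (-(2 * (1 + B))) ≤ (2 / B) ^ 2 * c ^ (-(2 * B)) := by
  set f : AddCircle p → ℝ := fun u => (c + dist x.1 u) ^ (-(1 + B))
  set g : AddCircle p' → ℝ := fun u => (c + dist x.2 u) ^ (-(1 + B))
  have hf : Integrable f := (Continuous.rpow_const (by fun_prop) fun u => .inl (by positivity)
    ).integrable_of_hasCompactSupport (.of_compactSpace _)
  have hg : Integrable g := (Continuous.rpow_const (by fun_prop) fun u => .inl (by positivity)
    ).integrable_of_hasCompactSupport (.of_compactSpace _)
  have hfg : Integrable (fun y : AddCircle p × AddCircle p' => f y.1 * g y.2) := by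
    rw [Measure.volume_eq_prod]; exact hf.mul_prod hg
  calc ∫ y, (c + dist x y) ^ (-(2 * (1 + B)))
      ≤ ∫ y : AddCircle p × AddCircle p', f y.1 * g y.2 :=
        integral_mono_of_nonneg (.of_forall fun y => by positivity) hfg <| .of_forall fun y => by
          simpa only [Prod.dist_eq] using
            const_add_max_rpow_neg_le dist_nonneg dist_nonneg hc (by linarith : 0 ≤ 1 + B)
    _ = (∫ u, f u) * ∫ u, g u := by rw [Measure.volume_eq_prod, integral_prod_mul]
    _ ≤ (2 / B * c ^ (-B)) * (2 / B * c ^ (-B)) := by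
        gcongr
        · exact AddCircle.integral_const_add_dist_rpow_neg_le hc hB x.1
        · exact AddCircle.integral_const_add_dist_rpow_neg_le hc hB x.2
    _ = (2 / B) ^ 2 * c ^ (-(2 * B)) := by
        rw [show -(2 * B) = -B + -B by ring, rpow_add hc]; ring

theorem rpow_neg_mul_sub_rpow_neg_le {A B s t : ℝ} (hA : 0 ≤ A) (hB : 0 ≤ B) (hs : 0 < s)
    (hst : s < t) :
    s ^ (-A) * (t - s) ^ (-B) ≤ (t / 2) ^ (-B) * s ^ (-A) + (t / 2) ^ (-A) * (t - s) ^ (-B) := by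
  have hts : 0 < t - s := by linarith
  rcases le_or_gt s (t / 2) with hs2 | hs2
  · have : (t - s) ^ (-B) ≤ (t / 2) ^ (-B) :=
      rpow_le_rpow_of_nonpos (by linarith) (by linarith) (by linarith)
    nlinarith [rpow_pos_of_pos hs (-A), rpow_pos_of_pos hts (-B),
      rpow_pos_of_pos (by linarith : 0 < t / 2) (-A)]
  · have : s ^ (-A) ≤ (t / 2) ^ (-A) :=
      rpow_le_rpow_of_nonpos (by linarith) hs2.le (by linarith)
    nlinarith [rpow_pos_of_pos hs (-A), rpow_pos_of_pos hts (-B),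
      rpow_pos_of_pos (by linarith : 0 < t / 2) (-B)]

theorem integrableOn_Ioo_rpow_neg {A t : ℝ} (hA : A < 1) :
    IntegrableOn (fun s : ℝ => s ^ (-A)) (Ioo 0 t) := by
  rcases le_or_gt t 0 with ht | ht
  · simp [Ioo_eq_empty_of_le ht]
  · exact (intervalIntegral.integrableOn_Ioo_rpow_iff ht).mpr (by linarith)

theorem integral_Ioo_rpow_neg {A t : ℝ} (hA : A < 1) (ht : 0 ≤ t) :
    ∫ s in Ioo 0 t, s ^ (-A) = t ^ (1 - A) / (1 - A) := by
  rw [← integral_Ioc_eq_integral_Ioo, ← intervalIntegral.integral_of_le ht,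
    integral_rpow (.inl (by linarith)), zero_rpow (by linarith), show -A + 1 = 1 - A by ring,
    sub_zero]

theorem integrableOn_Ioo_sub_rpow_neg {B t : ℝ} (hB : B < 1) :
    IntegrableOn (fun s : ℝ => (t - s) ^ (-B)) (Ioo 0 t) := by
  have h := ((Measure.measurePreserving_sub_left volume t).integrableOn_comp_preimage
    (MeasurableEquiv.subLeft t).measurableEmbedding).mpr (integrableOn_Ioo_rpow_neg (t := t) hB)
  simpa [Function.comp_def] using h

theorem integral_Ioo_sub_rpow_neg {B t : ℝ} (hB : B < 1) (ht : 0 ≤ t) :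
    ∫ s in Ioo 0 t, (t - s) ^ (-B) = t ^ (1 - B) / (1 - B) := by
  have h := (Measure.measurePreserving_sub_left volume t).setIntegral_preimage_emb
    (MeasurableEquiv.subLeft t).measurableEmbedding (fun s : ℝ => s ^ (-B)) (Ioo 0 t)
  simp only [preimage_const_sub_Ioo, sub_self, sub_zero] at h
  rw [h, integral_Ioo_rpow_neg hB ht]

section BetaBound

variable {A B t : ℝ} (hA₀ : 0 ≤ A) (hA₁ : A < 1) (hB₀ : 0 ≤ B) (hB₁ : B < 1)
include hA₀ hA₁ hB₀ hB₁

theorem integrableOn_Ioo_rpow_neg_mul_sub_rpow_neg :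
    IntegrableOn (fun s : ℝ => s ^ (-A) * (t - s) ^ (-B)) (Ioo 0 t) := by
  refine Integrable.mono' (((integrableOn_Ioo_rpow_neg hA₁).const_mul ((t / 2) ^ (-B))).add
    ((integrableOn_Ioo_sub_rpow_neg hB₁).const_mul ((t / 2) ^ (-A)))) (by fun_prop)
    ((ae_restrict_mem measurableSet_Ioo).mono fun s hs => ?_)
  rw [Real.norm_of_nonneg
    (mul_nonneg (rpow_nonneg hs.1.le _) (rpow_nonneg (sub_nonneg.mpr hs.2.le) _))]
  exact rpow_neg_mul_sub_rpow_neg_le hA₀ hB₀ hs.1 hs.2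

theorem integral_Ioo_rpow_neg_mul_sub_rpow_neg_le (ht : 0 < t) :
    ∫ s in Ioo 0 t, s ^ (-A) * (t - s) ^ (-B)
      ≤ (2 ^ B / (1 - A) + 2 ^ A / (1 - B)) * t ^ (1 - A - B) := by
  have hsA := integrableOn_Ioo_rpow_neg (t := t) hA₁
  have hsB := integrableOn_Ioo_sub_rpow_neg (t := t) hB₁
  have half (r : ℝ) : (t / 2) ^ (-r) = 2 ^ r * t ^ (-r) := by
    rw [div_rpow ht.le zero_le_two, rpow_neg zero_le_two, div_inv_eq_mul, mul_comm]
  calc ∫ s in Ioo 0 t, s ^ (-A) * (t - s) ^ (-B)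
      ≤ ∫ s in Ioo 0 t, ((t / 2) ^ (-B) * s ^ (-A) + (t / 2) ^ (-A) * (t - s) ^ (-B)) :=
        setIntegral_mono_on (integrableOn_Ioo_rpow_neg_mul_sub_rpow_neg hA₀ hA₁ hB₀ hB₁)
          ((hsA.const_mul _).add (hsB.const_mul _)) measurableSet_Ioo
          fun s hs => rpow_neg_mul_sub_rpow_neg_le hA₀ hB₀ hs.1 hs.2
    _ = (t / 2) ^ (-B) * (t ^ (1 - A) / (1 - A))
          + (t / 2) ^ (-A) * (t ^ (1 - B) / (1 - B)) := by
        rw [integral_add (hsA.const_mul _) (hsB.const_mul _), integral_const_mul,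
          integral_const_mul, integral_Ioo_rpow_neg hA₁ ht.le, integral_Ioo_sub_rpow_neg hB₁ ht.le]
    _ = 2 ^ B / (1 - A) * (t ^ (-B) * t ^ (1 - A))
          + 2 ^ A / (1 - B) * (t ^ (-A) * t ^ (1 - B)) := by
        rw [half, half]; ring
    _ = (2 ^ B / (1 - A) + 2 ^ A / (1 - B)) * t ^ (1 - A - B) := by
        rw [← rpow_add ht, ← rpow_add ht, show -B + (1 - A) = 1 - A - B by ring,
          show -A + (1 - B) = 1 - A - B by ring]
        ring

end BetaBound

theorem AddCircle.integral_Ioo_integral_prod_rpow_le {p p' : ℝ} [Fact (0 < p)] [Fact (0 < p')]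
    {A B t : ℝ} (hA₀ : 0 ≤ A) (hA₁ : A < 1) (hB₀ : 0 < B) (hB₁ : B < 1) (ht : 0 < t)
    (x : AddCircle p × AddCircle p') :
    ∫ s in Ioo 0 t, ∫ y, s ^ (-A) * ((t - s) ^ ((1 : ℝ) / 2) + dist x y) ^ (-(2 * (1 + B)))
      ≤ (2 / B) ^ 2 * (2 ^ B / (1 - A) + 2 ^ A / (1 - B)) * t ^ (1 - A - B) := by
  have inner : ∀ s ∈ Ioo 0 t,
      ∫ y, s ^ (-A) * ((t - s) ^ ((1 : ℝ) / 2) + dist x y) ^ (-(2 * (1 + B)))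
        ≤ (2 / B) ^ 2 * (s ^ (-A) * (t - s) ^ (-B)) := by
    intro s hs
    have hts : 0 < t - s := sub_pos.mpr hs.2
    rw [integral_const_mul]
    calc s ^ (-A) * ∫ y, ((t - s) ^ ((1 : ℝ) / 2) + dist x y) ^ (-(2 * (1 + B)))
        ≤ s ^ (-A) * ((2 / B) ^ 2 * ((t - s) ^ ((1 : ℝ) / 2)) ^ (-(2 * B))) := by
          refine mul_le_mul_of_nonneg_left ?_ (rpow_nonneg hs.1.le _)
          exact AddCircle.integral_prod_const_add_dist_rpow_neg_le (rpow_pos_of_pos hts _) hB₀ x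
      _ = (2 / B) ^ 2 * (s ^ (-A) * (t - s) ^ (-B)) := by
          rw [← rpow_mul hts.le, show (1 : ℝ) / 2 * -(2 * B) = -B by ring]; ring
  have hint := (integrableOn_Ioo_rpow_neg_mul_sub_rpow_neg hA₀ hA₁ hB₀.le hB₁ (t := t)).const_mul
    ((2 / B) ^ 2)
  have hmem := ae_restrict_mem (μ := volume) (measurableSet_Ioo (a := (0 : ℝ)) (b := t))
  have hnonneg : ∀ s ∈ Ioo 0 t, ∀ y,
      0 ≤ s ^ (-A) * ((t - s) ^ ((1 : ℝ) / 2) + dist x y) ^ (-(2 * (1 + B))) := fun s hs y =>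
    mul_nonneg (rpow_nonneg hs.1.le _)
      (rpow_nonneg (add_nonneg (rpow_nonneg (sub_nonneg.mpr hs.2.le) _) dist_nonneg) _)
  calc ∫ s in Ioo 0 t, ∫ y, s ^ (-A) * ((t - s) ^ ((1 : ℝ) / 2) + dist x y) ^ (-(2 * (1 + B)))
      ≤ ∫ s in Ioo 0 t, (2 / B) ^ 2 * (s ^ (-A) * (t - s) ^ (-B)) :=
        integral_mono_of_nonneg (hmem.mono fun s hs => integral_nonneg (hnonneg s hs)) hint
          (hmem.mono inner)
    _ ≤ (2 / B) ^ 2 * (2 ^ B / (1 - A) + 2 ^ A / (1 - B)) * t ^ (1 - A - B) := by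
        rw [integral_const_mul, mul_assoc]
        gcongr
        exact integral_Ioo_rpow_neg_mul_sub_rpow_neg_le hA₀ hA₁ hB₀.le hB₁ ht

/-- Weighted space-time kernel estimate on the torus: with `4π ≤ β² < 6π`, suitable
`κ, β̄, η, ν` and `γ = 3 − β²/(2π) − (1−ν)η`, there is a constant `C` such that for all
`T ∈ (0,1]`, all `0 < t ≤ T` and all `x ∈ 𝕋²`,
`t^{(1−η)/2} ∫₀ᵗ ∫_{𝕋²} s^{−(1−η)ν/2} ((t−s)^{1/2} + d(x,y))^{−2−β²/(2π)+ν} dy ds ≤ C T^{γ/2}`. -/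
theorem weighted_spacetime_kernel_estimate (β κ βbar η ν γ : ℝ)
    (hβl : 4 * π ≤ β ^ 2) (hβu : β ^ 2 < 6 * π)
    (hκ : κ = (10 : ℝ) ^ (-3 : ℤ) * (6 * π - β ^ 2))
    (hβbar : βbar = β ^ 2 / (4 * π) + κ)
    (hη : η ∈ Set.Ioo (βbar / 2 - 1) 0)
    (hν : ν ∈ Set.Ioc (β ^ 2 / (2 * π) - 2) 1)
    (hγ : γ = 3 - β ^ 2 / (2 * π) - (1 - ν) * η) :
    ∃ C : ℝ, ∀ T ∈ Set.Ioc (0 : ℝ) 1, ∀ t ∈ Set.Ioc (0 : ℝ) T, ∀ x : Torus2,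
      t ^ ((1 - η)/2) *
        ∫ s in Set.Ioo (0 : ℝ) t, ∫ y : Torus2,
          s ^ (-((1 - η) * ν / 2)) *
            ((t - s) ^ ((1 : ℝ)/2) + dist x y) ^ (-2 - β ^ 2 / (2 * π) + ν)
      ≤ C * T ^ (γ/2) := by
  obtain ⟨hη₁, hη₀⟩ := hη
  obtain ⟨hν₁, hν₂⟩ := hν
  have hr₂ : 2 ≤ β ^ 2 / (2 * π) := by rw [le_div_iff₀ (by positivity)]; linarith
  have hr₃ : β ^ 2 / (2 * π) < 3 := by rw [div_lt_iff₀ (by positivity)]; linarith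
  have hη₁' : -(1 / 2) < η := by
    have : 1 ≤ β ^ 2 / (4 * π) := by rw [le_div_iff₀ (by positivity)]; linarith
    have : 0 ≤ κ := by rw [hκ]; exact mul_nonneg (by positivity) (by linarith)
    linarith
  set A := (1 - η) * ν / 2 with hA
  set B := (β ^ 2 / (2 * π) - ν) / 2 with hB
  have hA₀ : 0 ≤ A := by rw [hA]; nlinarith
  have hA₁ : A < 1 := by rw [hA]; nlinarith
  have hB₀ : 0 < B := by rw [hB]; linarith
  have hB₁ : B < 1 := by rw [hB]; linarith
  have hγ₀ : 0 ≤ γ := by rw [hγ]; nlinarith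
  set M := (2 / B) ^ 2 * (2 ^ B / (1 - A) + 2 ^ A / (1 - B))
  refine ⟨M, fun T _ t ⟨ht, htT⟩ x => ?_⟩
  have key := AddCircle.integral_Ioo_integral_prod_rpow_le hA₀ hA₁ hB₀ hB₁ ht x
  rw [show -(2 * (1 + B)) = -2 - β ^ 2 / (2 * π) + ν by ring] at key
  calc _ ≤ t ^ ((1 - η) / 2) * (M * t ^ (1 - A - B)) := by gcongr
    _ = M * t ^ (γ / 2) := by
        rw [mul_left_comm, ← rpow_add ht]
        congr 2
        rw [hγ]; ring
    _ ≤ _ := by gcongr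
end
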